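/- Let λ ∈ F with λ + λ̄ = 1, let μ ∈ K with μ ≠ 0, and let a ∈ F with a ≠ 0 be such that Tr_m(a·ā) = 0. Then ∑_{x ∈ F} ε(Tr_n(λ·x^(2^m+1)) + Tr_n(μ·x^(2^m−1)) + Tr_n(a·x)) = 1 + k_m(μ). -/

import Mathlib

/-!
Write `q = 2 ^ m` and `U = {v : v ^ (q + 1) = 1}`. Every `x ≠ 0` factors uniquely as `x = y v`
with `y ∈ K^*` and `v ∈ U` (`y` is the square root of the norm `x ^ (q + 1)`). In these
coordinates `Tr_n(λ x^(q+1)) = Tr_m(y)`, `Tr_n(μ x^(q-1)) = Tr_m(μ (v² + v⁻²))` and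
`Tr_n(a x) = Tr_m((a v + (a v)^q) y)`, so for fixed `v` the sum over `y ∈ K^*` is a complete
additive character sum, equal to `-1` because `1 + a v + (a v)^q ≠ 0` when `Tr_m(a ā) = 0`.
What is left is `-∑_{v ∈ U} χ_m(μ (v + v⁻¹))`; since `u + u⁻¹ = t ∈ K^*` has two solutions in
`U` or none according as `Tr_m(t⁻¹) = 1` or `0` (an Artin–Schreier equation), this is `k_m(μ)`.
-/

open Finset

/-- Absolute trace-style sum `Tr_n : F → F` for `n = 2m`. -/
def trN (m : ℕ) {F : Type*} [Field F] (x : F) : F :=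
  ∑ i ∈ Finset.range (2 * m), x ^ (2 ^ i)

/-- Trace-style sum `Tr_m : F → F` (meant for elements of the subfield `K`). -/
def trM (m : ℕ) {F : Type*} [Field F] (x : F) : F :=
  ∑ i ∈ Finset.range m, x ^ (2 ^ i)

/-- `ε(0) = 1`, `ε(t) = -1` for `t ≠ 0`. -/
def eps {F : Type*} [Field F] [DecidableEq F] (t : F) : ℤ :=
  if t = 0 then 1 else -1

/-- Kloosterman sum `k_m(μ) = ∑_{x ∈ K, x ≠ 0} χ_m(x + μ x⁻¹)`. -/
def klooM (m : ℕ) {F : Type*} [Field F] [Fintype F] [DecidableEq F] (μ : F) : ℤ :=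
  ∑ x ∈ Finset.univ.filter (fun x : F => x ^ (2 ^ m) = x ∧ x ≠ 0),
    eps (trM m (x + μ * x⁻¹))

/-- Kloosterman sum over the big field: `k_n(μ) = ∑_{x ∈ F, x ≠ 0} χ_n(x + μ x⁻¹)`. -/
def klooN (m : ℕ) {F : Type*} [Field F] [Fintype F] [DecidableEq F] (μ : F) : ℤ :=
  ∑ x ∈ Finset.univ.filter (fun x : F => x ≠ 0), eps (trN m (x + μ * x⁻¹))

/-- Walsh transform of `h : F → F` (with values in `{0,1}`) at `a`. -/
def walsh (m : ℕ) {F : Type*} [Field F] [Fintype F] [DecidableEq F] (h : F → F) (a : F) : ℤ :=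
  ∑ x : F, eps (h x + trN m (a * x))

/-- The Boolean function `f_{λ,μ}(x) = Tr_n(λ x^{2^m+1}) + Tr_n(x)·Tr_n(μ x^{2^m-1})`. -/
def fFun (m : ℕ) {F : Type*} [Field F] (l μ : F) : F → F :=
  fun x => trN m (l * x ^ (2 ^ m + 1)) + trN m x * trN m (μ * x ^ (2 ^ m - 1))

/-- The Boolean function
`g_{λ,μ}(x) = (1 + Tr_n(x))·Tr_n(λ x^{2^m+1}) + Tr_n(x)·Tr_n(μ x^{2^m-1})`. -/
def gFun (m : ℕ) {F : Type*} [Field F] (l μ : F) : F → F :=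
  fun x => (1 + trN m x) * trN m (l * x ^ (2 ^ m + 1)) +
    trN m x * trN m (μ * x ^ (2 ^ m - 1))

section Trace

variable {F : Type*} [Field F]

lemma trM_zero (m : ℕ) : trM m (0 : F) = 0 :=
  sum_eq_zero fun _ _ => zero_pow (pow_ne_zero _ two_ne_zero)

open Polynomial in
lemma card_filter_trM_eq_zero_le [Fintype F] [DecidableEq F] {k : ℕ} (hk : 0 < k) :
    #{x : F | trM k x = 0} ≤ 2 ^ (k - 1) := by
  set P : F[X] := ∑ i ∈ range k, X ^ 2 ^ i
  have hP0 : P ≠ 0 := by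
    intro h
    have h1 := congrArg (coeff · 1) h
    simp [P, coeff_X_pow, eq_comm (a := 1), hk] at h1
  calc #{x : F | trM k x = 0} ≤ P.natDegree :=
        card_le_degree_of_subset_roots fun x hx => by
          simpa [mem_roots hP0, P, eval_finsetSum, trM] using (mem_filter.1 hx).2
    _ ≤ 2 ^ (k - 1) := natDegree_sum_le_of_forall_le _ _ fun i hi =>
        (natDegree_X_pow_le _).trans (Nat.pow_le_pow_right two_pos (by simp at hi; omega))

variable [CharP F 2] {m : ℕ}

lemma trM_add (m : ℕ) (x y : F) : trM m (x + y) = trM m x + trM m y := by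
  simp only [trM, add_pow_char_pow, sum_add_distrib]

lemma trM_sq (m : ℕ) (x : F) : trM m (x ^ 2) = trM m x + x ^ 2 ^ m + x := by
  have hshift := sum_range_succ' (fun i => x ^ 2 ^ i) m
  rw [sum_range_succ, pow_zero, pow_one] at hshift
  simp only [trM, ← pow_mul, ← pow_succ']
  linear_combination -hshift - x * CharTwo.two_eq_zero (R := F)

lemma trM_sq_add_self (m : ℕ) (w : F) : trM m (w ^ 2 + w) = w ^ 2 ^ m + w := by
  rw [trM_add, trM_sq]
  linear_combination trM m w * CharTwo.two_eq_zero (R := F)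

lemma trM_sq_of_fixed {x : F} (hx : x ^ 2 ^ m = x) : trM m (x ^ 2) = trM m x := by
  rw [trM_sq, hx, add_assoc, CharTwo.add_self_eq_zero, add_zero]

lemma isIdempotentElem_trM {x : F} (hx : x ^ 2 ^ m = x) : IsIdempotentElem (trM m x) := by
  have hsq : trM m x ^ 2 = trM m (x ^ 2) := by
    simp only [trM, CharTwo.sum_sq, ← pow_mul, mul_comm]
  rw [IsIdempotentElem, ← sq, hsq, trM_sq_of_fixed hx]

lemma trN_eq_trM_add_pow (m : ℕ) (x : F) : trN m x = trM m (x + x ^ 2 ^ m) := by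
  rw [trN, two_mul, sum_range_add, trM_add, trM, trM]
  simp only [pow_add, pow_mul]

lemma trN_eq_zero_of_fixed {c : F} (hc : c ^ 2 ^ m = c) : trN m c = 0 := by
  rw [trN_eq_trM_add_pow, hc, CharTwo.add_self_eq_zero, trM_zero]

lemma trN_mul_of_fixed {l c : F} (hl : l + l ^ 2 ^ m = 1) (hc : c ^ 2 ^ m = c) :
    trN m (l * c) = trM m c := by
  rw [trN_eq_trM_add_pow, mul_pow, hc, ← add_mul, hl, one_mul]

lemma add_pow_two_pow_ne_one {w : F} (hw : trM m (w * w ^ 2 ^ m) = 0) : w + w ^ 2 ^ m ≠ 1 := by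
  intro h
  have hw2 : w ^ 2 + w = w * w ^ 2 ^ m := by
    linear_combination (-w) * h + w ^ 2 * CharTwo.two_eq_zero (R := F)
  rw [← hw2, trM_sq_add_self, add_comm, h] at hw
  exact one_ne_zero hw

end Trace

section Eps

variable {F : Type*} [Field F] [DecidableEq F]

lemma eps_zero : eps (0 : F) = 1 := if_pos rfl

lemma eps_one : eps (1 : F) = -1 := if_neg one_ne_zero

lemma eps_add [CharP F 2] {s t : F} (hs : IsIdempotentElem s) (ht : IsIdempotentElem t) :
    eps (s + t) = eps s * eps t := by
  rcases IsIdempotentElem.iff_eq_zero_or_one.1 hs with rfl | rfl <;>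
    rcases IsIdempotentElem.iff_eq_zero_or_one.1 ht with rfl | rfl <;>
    simp [eps, CharTwo.add_self_eq_zero]

end Eps

section FiniteField

variable {F : Type*} [Field F] [Fintype F] {m : ℕ}

lemma pow_two_pow_pow_two_pow (hcard : Fintype.card F = 2 ^ (2 * m)) (x : F) :
    (x ^ 2 ^ m) ^ 2 ^ m = x := by
  rw [← pow_mul, ← pow_add, ← two_mul, ← hcard, FiniteField.pow_card]

lemma mul_pow_two_pow_fixed (hcard : Fintype.card F = 2 ^ (2 * m)) (x : F) :
    (x * x ^ 2 ^ m) ^ 2 ^ m = x * x ^ 2 ^ m := by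
  rw [mul_pow, pow_two_pow_pow_two_pow hcard, mul_comm]

variable [CharP F 2]

lemma add_pow_two_pow_fixed (hcard : Fintype.card F = 2 ^ (2 * m)) (x : F) :
    (x + x ^ 2 ^ m) ^ 2 ^ m = x + x ^ 2 ^ m := by
  rw [add_pow_char_pow, pow_two_pow_pow_two_pow hcard, add_comm]

lemma trN_sq_add_self (hcard : Fintype.card F = 2 ^ (2 * m)) (x : F) : trN m (x ^ 2 + x) = 0 := by
  rw [show trN m (x ^ 2 + x) = trM (2 * m) (x ^ 2 + x) from rfl, trM_sq_add_self, ← hcard,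
    FiniteField.pow_card, CharTwo.add_self_eq_zero]

variable [DecidableEq F]

lemma exists_fixed_trM_eq_one (hm : 0 < m) (hcard : Fintype.card F = 2 ^ (2 * m)) :
    ∃ z : F, z ^ 2 ^ m = z ∧ trM m z = 1 := by
  -- `Tr_n = Tr_m ∘ (x ↦ x + x ^ 2 ^ m)`, and `Tr_n` has too few zeros to vanish on all of `F`
  obtain ⟨x, hx⟩ : ∃ x : F, trN m x ≠ 0 := by
    by_contra! h
    replace h : ∀ x : F, trM (2 * m) x = 0 := h
    have hle := card_filter_trM_eq_zero_le (F := F) (k := 2 * m) (by omega)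
    rw [filter_true_of_mem fun x _ => h x, card_univ, hcard] at hle
    exact hle.not_gt (Nat.pow_lt_pow_right one_lt_two (by omega))
  have hfix := add_pow_two_pow_fixed hcard x
  rw [trN_eq_trM_add_pow] at hx
  exact ⟨_, hfix,
    (IsIdempotentElem.iff_eq_zero_or_one.1 (isIdempotentElem_trM hfix)).resolve_left hx⟩

lemma exists_sq_add_self_eq (hm : 0 < m) (hcard : Fintype.card F = 2 ^ (2 * m)) {c : F}
    (hc : trN m c = 0) : ∃ z : F, z ^ 2 + z = c := by
  -- the image of `x ↦ x ^ 2 + x` has half the size of `F` and lies in the kernel of `Tr_n`,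
  -- which is at most that large
  let φ : F →+ F := AddMonoidHom.mk' (fun x => x ^ 2 + x) fun x y => by rw [CharTwo.add_sq]; ring
  have hker : (φ.ker : Set F) = {0, 1} := by
    ext x
    simp [φ, sq, ← mul_add_one, CharTwo.add_eq_zero]
  have hrange : Nat.card φ.range = 2 ^ (2 * m - 1) := by
    have h := φ.ker.card_mul_index
    rw [AddSubgroup.index_ker, ← SetLike.coe_sort_coe, Nat.card_coe_set_eq, hker,
      Set.ncard_pair zero_ne_one, Nat.card_eq_fintype_card (α := F), hcard,
      ← Nat.sub_add_cancel (show 1 ≤ 2 * m by omega), pow_succ'] at h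
    omega
  have hsub : (φ.range : Set F) ⊆ {x | trN m x = 0} := by
    rintro _ ⟨x, rfl⟩
    exact trN_sq_add_self hcard x
  have hle : {x : F | trN m x = 0}.ncard ≤ (φ.range : Set F).ncard := by
    rw [← Nat.card_coe_set_eq (φ.range : Set F), SetLike.coe_sort_coe, hrange,
      Set.ncard_eq_toFinset_card', Set.toFinset_ofPred]
    exact card_filter_trM_eq_zero_le (by omega)
  have hmem : c ∈ (φ.range : Set F) := by
    rw [Set.eq_of_subset_of_ncard_le hsub hle]
    exact hc
  exact hmem

end FiniteField

section Subfield

variable (m : ℕ) (F : Type*) [Field F] [Fintype F] [DecidableEq F]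

/- `K` and `K^*` in the notation of the statement; `unitCircle` is the kernel of the norm
`x ↦ x ^ (2 ^ m + 1)` from `F^*` onto `K^*`. -/
def fixedSet : Finset F := {x | x ^ 2 ^ m = x}

def fixedUnits : Finset F := {x | x ^ 2 ^ m = x ∧ x ≠ 0}

def unitCircle : Finset F := {v | v ^ (2 ^ m + 1) = 1}

variable {m F}

@[simp] lemma mem_fixedSet {x : F} : x ∈ fixedSet m F ↔ x ^ 2 ^ m = x := by simp [fixedSet]

@[simp] lemma mem_fixedUnits {x : F} : x ∈ fixedUnits m F ↔ x ^ 2 ^ m = x ∧ x ≠ 0 := by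
  simp [fixedUnits]

@[simp] lemma mem_unitCircle {v : F} : v ∈ unitCircle m F ↔ v ^ (2 ^ m + 1) = 1 := by
  simp [unitCircle]

lemma ne_zero_of_mem_unitCircle {v : F} (hv : v ∈ unitCircle m F) : v ≠ 0 := by
  rintro rfl
  simp at hv

lemma mem_unitCircle_iff_pow_eq_inv {v : F} (hv : v ≠ 0) :
    v ∈ unitCircle m F ↔ v ^ 2 ^ m = v⁻¹ := by
  rw [mem_unitCircle, pow_succ]
  exact ⟨eq_inv_of_mul_eq_one_left, fun h => by rw [h, inv_mul_cancel₀ hv]⟩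

lemma pow_eq_inv_of_mem_unitCircle {v : F} (hv : v ∈ unitCircle m F) : v ^ 2 ^ m = v⁻¹ :=
  (mem_unitCircle_iff_pow_eq_inv (ne_zero_of_mem_unitCircle hv)).1 hv

lemma sum_fixedUnits_mul {M : Type*} [AddCommMonoid M] {c : F} (hc : c ∈ fixedUnits m F)
    (f : F → M) : ∑ y ∈ fixedUnits m F, f (c * y) = ∑ y ∈ fixedUnits m F, f y := by
  obtain ⟨hcK, hc0⟩ := mem_fixedUnits.1 hc
  exact sum_equiv (Equiv.mulLeft₀ c hc0) (fun y => by simp [mul_pow, hcK, hc0, mul_right_inj' hc0])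
    fun _ _ => rfl

variable [CharP F 2]

lemma eq_one_of_mem_unitCircle_of_fixed {v : F} (hv : v ∈ unitCircle m F)
    (hvK : v ^ 2 ^ m = v) : v = 1 := by
  rw [mem_unitCircle, pow_succ, hvK, ← sq, ← one_pow 2] at hv
  exact CharTwo.sq_inj.1 hv

lemma sum_fixedSet_eps_trM (hm : 0 < m) (hcard : Fintype.card F = 2 ^ (2 * m)) :
    ∑ y ∈ fixedSet m F, eps (trM m y) = 0 := by
  obtain ⟨z, hzK, hz⟩ := exists_fixed_trM_eq_one hm hcard
  have hshift : ∑ y ∈ fixedSet m F, eps (trM m (y + z)) = ∑ y ∈ fixedSet m F, eps (trM m y) :=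
    sum_equiv (Equiv.addRight z) (fun y => by simp [add_pow_char_pow, hzK]) fun _ _ => rfl
  have hflip : ∀ y ∈ fixedSet m F, eps (trM m (y + z)) = -eps (trM m y) := fun y hy => by
    rw [trM_add, hz, eps_add (isIdempotentElem_trM (mem_fixedSet.1 hy)) .one, eps_one,
      mul_neg_one]
  rw [sum_congr rfl hflip, sum_neg_distrib] at hshift
  linarith

lemma sum_fixedUnits_eps_trM_mul (hm : 0 < m) (hcard : Fintype.card F = 2 ^ (2 * m)) {c : F}
    (hc : c ∈ fixedUnits m F) : ∑ y ∈ fixedUnits m F, eps (trM m (c * y)) = -1 := by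
  have hunits : fixedUnits m F = (fixedSet m F).erase 0 := by
    ext
    simp [and_comm]
  have hsplit := add_sum_erase _ (fun y => eps (trM m y)) (show (0 : F) ∈ fixedSet m F by simp)
  rw [sum_fixedSet_eps_trM hm hcard, trM_zero, eps_zero] at hsplit
  rw [sum_fixedUnits_mul hc fun y => eps (trM m y), hunits]
  linarith

end Subfield

section Kloosterman

variable {F : Type*} [Field F] [CharP F 2] {m : ℕ}

lemma add_inv_eq_iff_mul_add_eq_one {u t : F} (ht : t ≠ 0) : u + u⁻¹ = t ↔ u * (u + t) = 1 := by
  constructor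
  · rintro rfl
    have hu : u ≠ 0 := by rintro rfl; simp at ht
    rw [CharTwo.add_cancel_left, mul_inv_cancel₀ hu]
  · intro h
    rw [← eq_inv_of_mul_eq_one_right h, CharTwo.add_cancel_left]

lemma add_inv_eq_iff_of_sq_add_self {u t z : F} (ht : t ≠ 0) (hz : z ^ 2 + z = t⁻¹ ^ 2) :
    u + u⁻¹ = t ↔ u = t * z ∨ u = t * z + t := by
  have hfactor : u * (u + t) + 1 = (u + t * z) * (u + (t * z + t)) := by
    linear_combination -t ^ 2 * hz - (1 + t * t⁻¹) * mul_inv_cancel₀ ht -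
      u * t * z * CharTwo.two_eq_zero (R := F)
  rw [add_inv_eq_iff_mul_add_eq_one ht, ← CharTwo.add_eq_zero, hfactor, mul_eq_zero,
    CharTwo.add_eq_zero, CharTwo.add_eq_zero]

variable [Fintype F] [DecidableEq F]

lemma card_filter_add_inv_eq (hm : 0 < m) (hcard : Fintype.card F = 2 ^ (2 * m)) {t : F}
    (ht : t ∈ fixedUnits m F) :
    (#{u ∈ (unitCircle m F).erase 1 | u + u⁻¹ = t} : ℤ) = 1 - eps (trM m t⁻¹) := by
  obtain ⟨htK, ht0⟩ := mem_fixedUnits.1 ht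
  have htinvK : t⁻¹ ^ 2 ^ m = t⁻¹ := by rw [inv_pow, htK]
  -- `u = t z` turns `u ^ 2 + t u + 1 = 0` into the Artin–Schreier equation `z ^ 2 + z = t⁻²`
  obtain ⟨z, hz⟩ := exists_sq_add_self_eq hm hcard (c := t⁻¹ ^ 2)
    (trN_eq_zero_of_fixed (by rw [← pow_mul, mul_comm, pow_mul, htinvK]))
  have hroots : ∀ u, u + u⁻¹ = t ↔ u = t * z ∨ u = t * z + t := fun u =>
    add_inv_eq_iff_of_sq_add_self ht0 hz
  have hfrob : ∀ u, u + u⁻¹ = t → u ^ 2 ^ m = u + t * trM m t⁻¹ := by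
    have hzT : z ^ 2 ^ m = z + trM m t⁻¹ := by
      rw [← trM_sq_of_fixed htinvK, ← hz, trM_sq_add_self, add_comm z, CharTwo.add_cancel_right]
    intro u hu
    rcases (hroots u).1 hu with rfl | rfl
    · rw [mul_pow, htK, hzT, mul_add]
    · rw [add_pow_char_pow, mul_pow, htK, hzT]
      ring
  have hmem : ∀ u, u + u⁻¹ = t → (u ∈ unitCircle m F ↔ trM m t⁻¹ = 1) := by
    intro u hu
    have hu0 : u ≠ 0 := by rintro rfl; simp [eq_comm, ht0] at hu
    have hinv : u⁻¹ = u + t := by rw [← hu, CharTwo.add_cancel_left]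
    rw [mem_unitCircle_iff_pow_eq_inv hu0, hfrob u hu, hinv, add_right_inj, mul_eq_left₀ ht0]
  have hne : ∀ u, u + u⁻¹ = t → u ≠ 1 := by
    rintro u hu rfl
    simp [CharTwo.add_self_eq_zero, eq_comm, ht0] at hu
  rcases IsIdempotentElem.iff_eq_zero_or_one.1 (isIdempotentElem_trM htinvK) with hT | hT
  · rw [hT, eps_zero, sub_self, Nat.cast_eq_zero, card_eq_zero, filter_eq_empty_iff]
    exact fun u hu h => zero_ne_one (hT.symm.trans ((hmem u h).1 (mem_erase.1 hu).2))
  · have hfiber : {u ∈ (unitCircle m F).erase 1 | u + u⁻¹ = t} = {t * z, t * z + t} := by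
      ext u
      simp only [mem_filter, mem_erase, mem_insert, mem_singleton, ← hroots]
      exact ⟨fun h => h.2, fun h => ⟨⟨hne u h, (hmem u h).2 hT⟩, h⟩⟩
    rw [hfiber, card_pair (by simpa using ht0), hT, eps_one]
    norm_num

lemma sum_unitCircle_eps_trM_eq_neg_klooM (hm : 0 < m) (hcard : Fintype.card F = 2 ^ (2 * m))
    {μ : F} (hμ : μ ∈ fixedUnits m F) :
    ∑ v ∈ unitCircle m F, eps (trM m (μ * (v + v⁻¹))) = -klooM m μ := by
  have hmaps : ∀ u ∈ (unitCircle m F).erase 1, u + u⁻¹ ∈ fixedUnits m F := by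
    intro u hu
    obtain ⟨hu1, hu⟩ := mem_erase.1 hu
    rw [← pow_eq_inv_of_mem_unitCircle hu]
    refine mem_fixedUnits.2 ⟨add_pow_two_pow_fixed hcard u, fun h => hu1 ?_⟩
    exact eq_one_of_mem_unitCircle_of_fixed hu (CharTwo.add_eq_zero.1 h).symm
  have hkloo : klooM m μ = ∑ t ∈ fixedUnits m F, eps (trM m t⁻¹ + trM m (μ * t)) :=
    calc klooM m μ = ∑ x ∈ fixedUnits m F, eps (trM m (x + μ * x⁻¹)) := rfl
      _ = ∑ t ∈ fixedUnits m F, eps (trM m (μ * t + μ * (μ * t)⁻¹)) :=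
        (sum_fixedUnits_mul hμ fun x => eps (trM m (x + μ * x⁻¹))).symm
      _ = _ := sum_congr rfl fun t _ => by
        rw [← trM_add, mul_inv, mul_inv_cancel_left₀ (mem_fixedUnits.1 hμ).2, add_comm]
  rw [← add_sum_erase _ _ (show (1 : F) ∈ unitCircle m F by simp),
    ← sum_fiberwise_of_maps_to' hmaps fun t => eps (trM m (μ * t))]
  calc
    _ = 1 + ∑ t ∈ fixedUnits m F, (1 - eps (trM m t⁻¹)) * eps (trM m (μ * t)) := by
        congr 1
        · simp [CharTwo.add_self_eq_zero, trM_zero, eps_zero]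
        · refine sum_congr rfl fun t ht => ?_
          rw [sum_const, nsmul_eq_mul, card_filter_add_inv_eq hm hcard ht]
    _ = 1 + ∑ t ∈ fixedUnits m F, eps (trM m (μ * t)) -
          ∑ t ∈ fixedUnits m F, eps (trM m t⁻¹ + trM m (μ * t)) := by
        rw [add_sub_assoc, ← sum_sub_distrib]
        refine congrArg _ (sum_congr rfl fun t ht => ?_)
        obtain ⟨htK, -⟩ := mem_fixedUnits.1 ht
        rw [eps_add (isIdempotentElem_trM (by rw [inv_pow, htK]))
          (isIdempotentElem_trM (by rw [mul_pow, (mem_fixedUnits.1 hμ).1, htK]))]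
        ring
    _ = -klooM m μ := by
        rw [sum_fixedUnits_eps_trM_mul hm hcard hμ, hkloo]
        ring

end Kloosterman

section Polar

variable {F : Type*} [Field F] [Fintype F] [DecidableEq F] [CharP F 2] {m : ℕ}

lemma sum_unitCircle_sq {M : Type*} [AddCommMonoid M] (f : F → M) :
    ∑ v ∈ unitCircle m F, f (v ^ 2) = ∑ v ∈ unitCircle m F, f v := by
  refine sum_equiv (frobeniusEquiv F 2) (fun v => ?_) fun _ _ => rfl
  rw [mem_unitCircle, mem_unitCircle]
  change _ ↔ (v ^ 2) ^ _ = _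
  rw [← pow_mul, mul_comm, pow_mul]
  exact ⟨fun h => by rw [h, one_pow], fun h => CharTwo.sq_inj.1 (h.trans (one_pow 2).symm)⟩

lemma sum_erase_zero_eq_sum_unitCircle_sum_fixedUnits (hcard : Fintype.card F = 2 ^ (2 * m))
    {M : Type*} [AddCommMonoid M] (f : F → M) :
    ∑ x ∈ univ.erase 0, f x = ∑ v ∈ unitCircle m F, ∑ y ∈ fixedUnits m F, f (y * v) := by
  -- `x = r · (x / r)` with `r` the square root of the norm `x ^ (2 ^ m + 1)`
  let r : F → F := fun x => (frobeniusEquiv F 2).symm (x * x ^ 2 ^ m)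
  have hr : ∀ x, r x ^ 2 = x * x ^ 2 ^ m := fun x => frobeniusEquiv_symm_pow_p F 2 _
  have hrK : ∀ x, r x ^ 2 ^ m = r x := fun x => CharTwo.sq_inj.1 <| by
    rw [← pow_mul, mul_comm, pow_mul, hr, mul_pow_two_pow_fixed hcard]
  have hr0 : ∀ x ≠ (0 : F), r x ≠ 0 := fun x hx h => by
    have := hr x
    rw [h, zero_pow two_ne_zero] at this
    exact mul_ne_zero hx (pow_ne_zero _ hx) this.symm
  rw [← sum_product']
  symm
  refine sum_nbij' (fun p => p.2 * p.1) (fun x => (x * (r x)⁻¹, r x)) ?_ ?_ ?_ ?_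
    fun _ _ => rfl
  · rintro ⟨v, y⟩ hp
    obtain ⟨hv, hy⟩ := mem_product.1 hp
    exact mem_erase.2 ⟨mul_ne_zero (mem_fixedUnits.1 hy).2 (ne_zero_of_mem_unitCircle hv),
      mem_univ _⟩
  · intro x hx
    have hx0 := (mem_erase.1 hx).1
    refine mem_product.2 ⟨(mem_unitCircle_iff_pow_eq_inv
      (mul_ne_zero hx0 (inv_ne_zero (hr0 x hx0)))).2 ?_, mem_fixedUnits.2 ⟨hrK x, hr0 x hx0⟩⟩
    rw [mul_pow, inv_pow, hrK]
    field_simp [hr0 x hx0]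
    linear_combination -hr x
  · rintro ⟨v, y⟩ hp
    obtain ⟨hv, hy⟩ := mem_product.1 hp
    obtain ⟨hyK, hy0⟩ := mem_fixedUnits.1 hy
    have hry : r (y * v) = y := CharTwo.sq_inj.1 <| by
      rw [hr, mul_pow y, hyK, pow_eq_inv_of_mem_unitCircle hv]
      field_simp [ne_zero_of_mem_unitCircle hv]
    simp only [hry]
    exact Prod.ext (by field_simp) rfl
  · intro x hx
    field_simp [hr0 x (mem_erase.1 hx).1]

lemma eps_summand_polar (hcard : Fintype.card F = 2 ^ (2 * m)) {l μ a : F}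
    (hl : l + l ^ 2 ^ m = 1) (hμK : μ ^ 2 ^ m = μ) {v y : F} (hv : v ∈ unitCircle m F)
    (hy : y ∈ fixedUnits m F) :
    eps (trN m (l * (y * v) ^ (2 ^ m + 1)) + trN m (μ * (y * v) ^ (2 ^ m - 1)) +
        trN m (a * (y * v))) =
      eps (trM m (μ * (v ^ 2 + (v ^ 2)⁻¹))) *
        eps (trM m ((1 + (a * v + (a * v) ^ 2 ^ m)) * y)) := by
  obtain ⟨hyK, hy0⟩ := mem_fixedUnits.1 hy
  have hv0 := ne_zero_of_mem_unitCircle hv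
  have hvq := pow_eq_inv_of_mem_unitCircle hv
  have hyvq : (y * v) ^ 2 ^ m = y * v⁻¹ := by rw [mul_pow, hyK, hvq]
  have hv2 : (v ^ 2) ^ 2 ^ m = (v ^ 2)⁻¹ := by rw [← pow_mul, mul_comm, pow_mul, hvq, inv_pow]
  have hv2inv : ((v ^ 2)⁻¹) ^ 2 ^ m = v ^ 2 := by rw [inv_pow, hv2, inv_inv]
  have h1 : trN m (l * (y * v) ^ (2 ^ m + 1)) = trM m y := by
    rw [pow_succ, hyvq, show y * v⁻¹ * (y * v) = y ^ 2 by field_simp,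
      trN_mul_of_fixed hl (by rw [← pow_mul, mul_comm, pow_mul, hyK]), trM_sq_of_fixed hyK]
  have h2 : trN m (μ * (y * v) ^ (2 ^ m - 1)) = trM m (μ * (v ^ 2 + (v ^ 2)⁻¹)) := by
    rw [pow_sub₀ _ (mul_ne_zero hy0 hv0) Nat.one_le_two_pow, pow_one, hyvq,
      show y * v⁻¹ * (y * v)⁻¹ = (v ^ 2)⁻¹ by field_simp, trN_eq_trM_add_pow, mul_pow, hμK,
      hv2inv, mul_add, add_comm]
  have h3 : trN m (a * (y * v)) = trM m ((a * v + (a * v) ^ 2 ^ m) * y) := by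
    rw [trN_eq_trM_add_pow, mul_pow a, hyvq, mul_pow a, hvq]
    ring_nf
  have hA : (μ * (v ^ 2 + (v ^ 2)⁻¹)) ^ 2 ^ m = μ * (v ^ 2 + (v ^ 2)⁻¹) := by
    rw [mul_pow, hμK, add_pow_char_pow, hv2, hv2inv, add_comm]
  have hB : ((1 + (a * v + (a * v) ^ 2 ^ m)) * y) ^ 2 ^ m =
      (1 + (a * v + (a * v) ^ 2 ^ m)) * y := by
    rw [mul_pow, hyK, add_pow_char_pow, one_pow, add_pow_two_pow_fixed hcard]
  rw [h1, h2, h3, ← eps_add (isIdempotentElem_trM hA) (isIdempotentElem_trM hB),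
    add_mul 1, one_mul, trM_add m y]
  ring_nf

lemma one_add_add_pow_mem_fixedUnits (hcard : Fintype.card F = 2 ^ (2 * m)) {a v : F}
    (haTr : trM m (a * a ^ 2 ^ m) = 0) (hv : v ∈ unitCircle m F) :
    1 + (a * v + (a * v) ^ 2 ^ m) ∈ fixedUnits m F := by
  have hnorm : a * v * (a * v) ^ 2 ^ m = a * a ^ 2 ^ m := by
    rw [mul_pow, pow_eq_inv_of_mem_unitCircle hv]
    field_simp [ne_zero_of_mem_unitCircle hv]
  refine mem_fixedUnits.2 ⟨by rw [add_pow_char_pow, one_pow, add_pow_two_pow_fixed hcard], ?_⟩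
  exact fun h => add_pow_two_pow_ne_one (hnorm ▸ haTr) (CharTwo.add_eq_zero.1 h).symm

end Polar

theorem stmt7_general (m : ℕ) (hm : 0 < m) (F : Type*) [Field F] [Fintype F] [DecidableEq F]
    (hcard : Fintype.card F = 2 ^ (2 * m))
    (l : F) (hl : l + l ^ (2 ^ m) = 1)
    (μ : F) (hμK : μ ^ (2 ^ m) = μ) (hμ0 : μ ≠ 0)
    (a : F) (haTr : trM m (a * a ^ (2 ^ m)) = 0) :
    ∑ x : F, eps (trN m (l * x ^ (2 ^ m + 1)) + trN m (μ * x ^ (2 ^ m - 1)) +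
      trN m (a * x)) = 1 + klooM m μ := by
  have : CharP F 2 := charP_of_card_eq_prime_pow hcard
  have hμ : μ ∈ fixedUnits m F := mem_fixedUnits.2 ⟨hμK, hμ0⟩
  rw [← add_sum_erase _ _ (mem_univ 0), sum_erase_zero_eq_sum_unitCircle_sum_fixedUnits hcard]
  calc
    _ = 1 + ∑ v ∈ unitCircle m F, -eps (trM m (μ * (v ^ 2 + (v ^ 2)⁻¹))) := by
      congr 1
      · have hq : 2 ^ m - 1 ≠ 0 := by have := Nat.one_lt_two_pow hm.ne'; omega
        simp [hq, trN, eps_zero]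
      · refine sum_congr rfl fun v hv => ?_
        rw [sum_congr rfl fun y hy => eps_summand_polar hcard hl hμK hv hy, ← mul_sum,
          sum_fixedUnits_eps_trM_mul hm hcard (one_add_add_pow_mem_fixedUnits hcard haTr hv),
          mul_neg_one]
    _ = 1 + klooM m μ := by
      rw [sum_neg_distrib, sum_unitCircle_sq fun w => eps (trM m (μ * (w + w⁻¹))),
        sum_unitCircle_eps_trM_eq_neg_klooM hm hcard hμ, neg_neg]

theorem stmt7 (m : ℕ) (hm : 0 < m) (F : Type*) [Field F] [Fintype F] [DecidableEq F]
    (hcard : Fintype.card F = 2 ^ (2 * m))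
    (l : F) (hl : l + l ^ (2 ^ m) = 1)
    (μ : F) (hμK : μ ^ (2 ^ m) = μ) (hμ0 : μ ≠ 0)
    (a : F) (ha : a ≠ 0) (haTr : trM m (a * a ^ (2 ^ m)) = 0) :
    ∑ x : F, eps (trN m (l * x ^ (2 ^ m + 1)) + trN m (μ * x ^ (2 ^ m - 1)) +
      trN m (a * x)) = 1 + klooM m μ :=
  stmt7_general m hm F hcard l hl μ hμK hμ0 a haTr
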